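/- In the group H, the element s⁻¹asa⁻² is not equal to the identity, where a, s denote the images of the generators in H. -/
import Mathlib


/-- Generators `a`, `b`, `s` of the presented group `H`. -/
inductive Gen3 : Type
  | a | b | s

open FreeGroup in
/-- The relators `b⁻¹ * a * b * a⁻¹` and `s⁻¹ * a² * s * a⁻⁴`. -/
def relsH : Set (FreeGroup Gen3) :=
  {(of Gen3.b)⁻¹ * of Gen3.a * of Gen3.b * (of Gen3.a)⁻¹,
   (of Gen3.s)⁻¹ * (of Gen3.a) ^ 2 * of Gen3.s * ((of Gen3.a) ^ 4)⁻¹}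

/-- The group `H = ⟨a, b, s ∣ b⁻¹ab = a, s⁻¹a²s = a⁴⟩`. -/
abbrev H : Type := PresentedGroup relsH

/-- The images of the generators `a`, `b`, `s` in `H`. -/
def ha : H := PresentedGroup.of Gen3.a
def hb : H := PresentedGroup.of Gen3.b
def hs : H := PresentedGroup.of Gen3.s

/-- A homomorphism target: send `a ↦ sr 0`, `b ↦ 1`, `s ↦ sr 1` in the dihedral group of order 6. -/
def fGen : Gen3 → DihedralGroup 3
  | .a => .sr 0
  | .b => 1
  | .s => .sr 1

lemma fGen_rels : ∀ r ∈ relsH, FreeGroup.lift fGen r = 1 := by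
  intro r hr
  rcases hr with h | h <;> subst h <;>
    simp only [map_mul, map_inv, map_pow, FreeGroup.lift_apply_of, fGen] <;> decide

/-- In `H`, the element `s⁻¹asa⁻²` is nontrivial. -/
theorem sasa_ne_one : hs⁻¹ * ha * hs * (ha ^ 2)⁻¹ ≠ 1 := by
  intro h
  have hφ : ∀ r ∈ relsH, FreeGroup.lift fGen r = 1 := fGen_rels
  have := congrArg (PresentedGroup.toGroup hφ) h
  simp only [map_mul, map_inv, map_pow, map_one, ha, hs,
    PresentedGroup.toGroup.of, fGen] at this
  exact absurd this (by decide)
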